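/- arXiv:1001.4695 — 2 statements merged into one kernel-verified Lean document; each statement's English description precedes it below -/
import Mathlib

section
/- Let p be a polynomial over ℂ and P the unique polynomial with P(0) = 0 and P(z) - P(z-1) = p(z). Define S(x,y) := P(y) - P(x-1). Then S satisfies translation invariance: for all x, y, s ∈ ℂ, S applied to the shifted polynomial ν ↦ p(ν+s) over bounds (x,y) equals S applied to p over bounds (x+s, y+s). -/
/-!
Both `Q` and `ν ↦ P(ν + s)` are discrete antiderivatives of `ν ↦ p(ν + s)`, so their difference
`R` satisfies `R(z) = R(z - 1)`. Then `R` takes the value `R(0)` at every natural number, hence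
is constant, and the two antiderivatives have the same increments.
-/

open Polynomial

namespace Polynomial

variable {R : Type*} [CommRing R] [IsDomain R] [CharZero R]

theorem eq_C_eval_zero_of_eval_sub_one {f : R[X]} (h : ∀ z, f.eval z = f.eval (z - 1)) :
    f = C (f.eval 0) := by
  have hnat : ∀ n : ℕ, f.eval (n : R) = f.eval 0 := by
    intro n
    induction n with
    | zero => simp
    | succ k ih => rw [h, Nat.cast_succ, add_sub_cancel_right, ih]
  apply eq_of_infinite_eval_eq
  refine (Set.infinite_range_of_injective Nat.cast_injective).mono ?_
  rintro _ ⟨n, rfl⟩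
  simp [hnat n]

theorem eval_sub_eval_eq_of_eval_sub_one {f g : R[X]}
    (h : ∀ z, f.eval z - f.eval (z - 1) = g.eval z - g.eval (z - 1)) (x y : R) :
    f.eval y - f.eval x = g.eval y - g.eval x := by
  have hconst := eq_C_eval_zero_of_eval_sub_one (f := f - g) fun z ↦ by
    simp only [eval_sub]
    linear_combination h z
  have hx := congrArg (eval x) hconst
  have hy := congrArg (eval y) hconst
  simp only [eval_sub, eval_C] at hx hy
  linear_combination hy - hx

end Polynomial

theorem fracSum_poly_translation_invariance_general (p P Q : Polynomial ℂ) (s : ℂ)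
    (hP : ∀ z : ℂ, P.eval z - P.eval (z - 1) = p.eval z)
    (hQ : ∀ z : ℂ, Q.eval z - Q.eval (z - 1) = p.eval (z + s)) :
    ∀ x y : ℂ, Q.eval y - Q.eval (x - 1) = P.eval (y + s) - P.eval (x + s - 1) := by
  intro x y
  have hshift : ∀ z, Q.eval z - Q.eval (z - 1) =
      (P.comp (X + C s)).eval z - (P.comp (X + C s)).eval (z - 1) := by
    intro z
    simp only [eval_comp, eval_add, eval_X, eval_C, sub_add_eq_add_sub, hQ, hP]
  rw [eval_sub_eval_eq_of_eval_sub_one hshift (x - 1) y]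
  simp only [eval_comp, eval_add, eval_X, eval_C, sub_add_eq_add_sub]

/-- Translation invariance of the fractional sum of a polynomial: if `P` is the discrete
antiderivative of `p` and `Q` is the discrete antiderivative of `ν ↦ p(ν + s)`, then
`Q(y) - Q(x-1) = P(y+s) - P(x+s-1)`. -/
theorem fracSum_poly_translation_invariance (p P Q : Polynomial ℂ) (s : ℂ)
    (hP0 : P.eval 0 = 0) (hP : ∀ z : ℂ, P.eval z - P.eval (z - 1) = p.eval z)
    (hQ0 : Q.eval 0 = 0) (hQ : ∀ z : ℂ, Q.eval z - Q.eval (z - 1) = p.eval (z + s)) :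
    ∀ x y : ℂ, Q.eval y - Q.eval (x - 1) = P.eval (y + s) - P.eval (x + s - 1) :=
  fracSum_poly_translation_invariance_general p P Q s hP hQ
end

section
/- For a constant c ∈ ℂ, any function S(x,y) (summation over complex bounds) satisfying continued summation (S(x,y) + S(y+1,z) = S(x,z)), translation invariance, linearity, and S(1,1)-consistency applied to the constant function c must satisfy: the sum from 1 to 1/2 of c equals c/2. -/
/- Splitting `∑_{ν=1}^{1}` at `1/2` gives `∑_{ν=1}^{1/2} c + ∑_{ν=3/2}^{1} c`, and translating the
second sum by `-1/2` turns it into the first; so twice the sum is the one-term sum `c`. -/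

lemma two_mul_sum_const_sub_half (S : ℂ → ℂ → (ℂ → ℂ) → ℂ)
    (hS1 : ∀ x y z : ℂ, ∀ f : ℂ → ℂ, S x y f + S (y + 1) z f = S x z f)
    (hS2 : ∀ x y s : ℂ, ∀ f : ℂ → ℂ, S (x + s) (y + s) f = S x y (fun ν => f (ν + s)))
    (x c : ℂ) : 2 * S x (x - 1 / 2) (fun _ => c) = S x x (fun _ => c) := by
  have hsplit := hS1 x (x - 1 / 2) x (fun _ => c)
  have hshift := hS2 x (x - 1 / 2) (1 / 2) (fun _ => c)
  rw [show x - 1 / 2 + 1 / 2 = x by ring] at hshift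
  rw [show x - 1 / 2 + 1 = x + 1 / 2 by ring, hshift] at hsplit
  rw [← hsplit, two_mul]

theorem sum_const_half_general (S : ℂ → ℂ → (ℂ → ℂ) → ℂ)
    (hS1 : ∀ x y z : ℂ, ∀ f : ℂ → ℂ, S x y f + S (y + 1) z f = S x z f)
    (hS2 : ∀ x y s : ℂ, ∀ f : ℂ → ℂ, S (x + s) (y + s) f = S x y (fun ν => f (ν + s)))
    (hS4 : ∀ f : ℂ → ℂ, S 1 1 f = f 1)
    (c : ℂ) :
    S 1 (1 / 2) (fun _ => c) = c / 2 := by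
  have h := two_mul_sum_const_sub_half S hS1 hS2 1 c
  rw [show (1 : ℂ) - 1 / 2 = 1 / 2 by norm_num, hS4] at h
  linear_combination h / 2

/-- Any summation theory `S` (assigning to bounds `x, y` and a function `f` a complex
number) satisfying continued summation, translation invariance, linearity, and
consistency with the classical one-term sum, assigns the value `c/2` to the sum of the
constant `c` from `1` to `1/2`. -/
theorem sum_const_half (S : ℂ → ℂ → (ℂ → ℂ) → ℂ)
    (hS1 : ∀ x y z : ℂ, ∀ f : ℂ → ℂ, S x y f + S (y + 1) z f = S x z f)
    (hS2 : ∀ x y s : ℂ, ∀ f : ℂ → ℂ, S (x + s) (y + s) f = S x y (fun ν => f (ν + s)))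
    (hS3 : ∀ x y : ℂ, ∀ f g : ℂ → ℂ, ∀ lam mu : ℂ,
      S x y (fun ν => lam * f ν + mu * g ν) = lam * S x y f + mu * S x y g)
    (hS4 : ∀ f : ℂ → ℂ, S 1 1 f = f 1)
    (c : ℂ) :
    S 1 (1 / 2) (fun _ => c) = c / 2 :=
  sum_const_half_general S hS1 hS2 hS4 c
end
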